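/- Assume the minus-infinity-order Rényi entropy rate ℋ₋∞ exists and is finite, and that there exists η > 0 such that d(s) ≤ s^{−(β·ℋ₋∞+η)} for all integers s ≥ 1. Then there is a sequence ξ(n) with ξ(n) → 1 as n → ∞ such that, for all sufficiently large n and all pairs x¹, x² ∈ 𝒳^{ℓ(n)}: P[X^ℓ(1) = x¹, X^ℓ(2) = x² | T = 0] ≥ ξ(n) · P_{X₁^ℓ}(x¹) · P_{X₁^ℓ}(x²). -/

import Mathlib

open MeasureTheory Filter Real

section

variable {𝒳 : Type*} [Fintype 𝒳] [MeasurableSpace 𝒳] [MeasurableSingletonClass 𝒳]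

/-- The left shift on two-sided sequences. -/
def shift {𝒳 : Type*} : (ℤ → 𝒳) → (ℤ → 𝒳) := fun ω i => ω (i + 1)

/-- The pmf of the block `(X_a, …, X_{a+t-1})` under `μ`. -/
noncomputable def blockPmf (μ : Measure (ℤ → 𝒳)) (a : ℤ) (t : ℕ) (x : Fin t → 𝒳) : ℝ :=
  (μ {ω | ∀ i : Fin t, ω (a + ((i : ℕ) : ℤ)) = x i}).toReal

/-- Shannon entropy of the block `(X_1, …, X_t)`. -/
noncomputable def shannonH (μ : Measure (ℤ → 𝒳)) (t : ℕ) : ℝ :=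
  ∑ x : Fin t → 𝒳, Real.negMulLog (blockPmf μ 1 t x)

/-- Order-`α` Rényi entropy of the block `(X_1, …, X_t)`. -/
noncomputable def renyiH (μ : Measure (ℤ → 𝒳)) (α : ℝ) (t : ℕ) : ℝ :=
  (1 - α)⁻¹ * Real.log (∑ x : Fin t → 𝒳, blockPmf μ 1 t x ^ α)

/-- `max_{x : P(x) > 0} log (1 / P_{X_1^t}(x))`. -/
noncomputable def maxInfo (μ : Measure (ℤ → 𝒳)) (t : ℕ) : ℝ :=
  sSup {r : ℝ | ∃ x : Fin t → 𝒳, 0 < blockPmf μ 1 t x ∧ r = Real.log (1 / blockPmf μ 1 t x)}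

/-- The σ-algebra generated by the coordinates with index `≤ i`. -/
def pastSigma (𝒳 : Type*) [MeasurableSpace 𝒳] (i : ℤ) : MeasurableSpace (ℤ → 𝒳) :=
  MeasurableSpace.comap (fun ω (j : {j : ℤ // j ≤ i}) => ω (j : ℤ)) inferInstance

/-- The σ-algebra generated by the coordinates with index `≥ i`. -/
def futureSigma (𝒳 : Type*) [MeasurableSpace 𝒳] (i : ℤ) : MeasurableSpace (ℤ → 𝒳) :=
  MeasurableSpace.comap (fun ω (j : {j : ℤ // i ≤ j}) => ω (j : ℤ)) inferInstance

/-- Strong mixing coefficient `d(s)`. -/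
noncomputable def mixCoef (μ : Measure (ℤ → 𝒳)) (s : ℕ) : ℝ :=
  sSup {r : ℝ | ∃ (i : ℤ) (E F : Set (ℤ → 𝒳)),
    MeasurableSet[pastSigma 𝒳 i] E ∧ MeasurableSet[futureSigma 𝒳 (i + (s : ℤ))] F ∧
    μ E ≠ 0 ∧ r = |(μ (F ∩ E)).toReal / (μ E).toReal - (μ F).toReal|}

/-- The read length `ℓ(n) = ⌈β log n⌉`. -/
noncomputable def ell (β : ℝ) (n : ℕ) : ℕ := ⌈β * Real.log n⌉₊

/-- The window from which `I(2)` is drawn uniformly, given `I(1) = i₁`. -/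
noncomputable def window (n L : ℕ) (i₁ : ℤ) : Finset ℤ :=
  if i₁ ≤ (L : ℤ) - 1 then Finset.Icc (i₁ - (L : ℤ) + 1) (i₁ + (n : ℤ) - (L : ℤ))
  else if i₁ ≤ (n : ℤ) - (L : ℤ) + 1 then Finset.Icc 1 (n : ℤ)
  else Finset.Icc (i₁ + (L : ℤ) - (n : ℤ)) (i₁ + (L : ℤ) - 1)

/-- Joint pmf of the pair of starting indices `(I(1), I(2))`. -/
noncomputable def idxWeight (n L : ℕ) (i₁ i₂ : ℤ) : ℝ :=
  if i₁ ∈ Finset.Icc 1 (n : ℤ) ∧ i₂ ∈ window n L i₁ then (((n : ℝ)) ^ 2)⁻¹ else 0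

/-- The (signed) overlap between the two reads. -/
def overlap (L : ℕ) (i₁ i₂ : ℤ) : ℤ :=
  if i₁ ≤ i₂ then max 0 ((L : ℤ) - (i₂ - i₁)) else -(max 0 ((L : ℤ) - (i₁ - i₂)))

/-- Bayesian error probability of the detector `That` in the noiseless setting. -/
noncomputable def errProb (μ : Measure (ℤ → 𝒳)) (n L : ℕ)
    (That : (Fin L → 𝒳) → (Fin L → 𝒳) → ℤ) : ℝ :=
  ∑' p : ℤ × ℤ, idxWeight n L p.1 p.2 *
    (μ {ω | That (fun k => ω (p.1 + ((k : ℕ) : ℤ))) (fun k => ω (p.2 + ((k : ℕ) : ℤ))) ≠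
        overlap L p.1 p.2}).toReal

/-- Minimal Bayesian error probability over all detectors with values in `𝒯`. -/
noncomputable def Pstar (μ : Measure (ℤ → 𝒳)) (β : ℝ) (n : ℕ) : ℝ :=
  sInf {e : ℝ | ∃ That : (Fin (ell β n) → 𝒳) → (Fin (ell β n) → 𝒳) → ℤ,
    (∀ y₁ y₂, That y₁ y₂ ∈ Set.Icc (1 - (ell β n : ℤ)) ((ell β n : ℤ))) ∧
    e = errProb μ n (ell β n) That}

/-!
Take the pairs of reads that start at least `ℓ` away from both ends of the sequence and whose
gap is at least `g(n) = ⌈n ^ θ⌉`, where `θ (β ℋ₋∞ + η) = β ℋ₋∞ + η / 2`. Each such pair has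
weight `1 / n²`, the reads do not overlap, and strong mixing gives
`P(x¹, x²) ≥ P(x¹) (P(x²) - d(g)) ≥ (1 - d(g) exp (maxInfo ℓ)) P(x¹) P(x²)`,
because every positive block probability is at least `exp (-maxInfo ℓ)`. Since
`maxInfo ℓ ≈ ℓ ℋ₋∞` and `ℓ ≈ β log n`, the defect `d(g) exp (maxInfo ℓ)` is `O(n ^ (-η / 4))`.
There are at least `(n - 2 (ℓ + g))²` such pairs and `P(T = 0) ≤ 1`, so conditioning on `T = 0`
costs at most the factor `(1 - 2 (ℓ + g) / n)² → 1`.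
-/

/-- `blockPmf μ a t x` is `(μ (blockSet a t x)).toReal` by definition. -/
def blockSet {α : Type*} (a : ℤ) (t : ℕ) (x : Fin t → α) : Set (ℤ → α) :=
  {ω | ∀ i : Fin t, ω (a + ((i : ℕ) : ℤ)) = x i}

lemma shift_preimage_blockSet {α : Type*} (a : ℤ) (t : ℕ) (x : Fin t → α) :
    shift ⁻¹' blockSet a t x = blockSet (a + 1) t x := by
  ext ω
  simp [blockSet, shift, add_right_comm]

section Blocks

variable {α : Type*} [MeasurableSpace α]

lemma measurableSet_comap_blockSet [MeasurableSingletonClass α] {P : ℤ → Prop} {a : ℤ} {t : ℕ}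
    (x : Fin t → α) (hP : ∀ i : Fin t, P (a + i)) :
    MeasurableSet[MeasurableSpace.comap (fun ω (j : {j : ℤ // P j}) => ω j) inferInstance]
      (blockSet a t x) := by
  have h : blockSet a t x =
      ⋂ i : Fin t, (fun ω (j : {j // P j}) => ω j) ⁻¹' {f | f ⟨a + i, hP i⟩ = x i} := by
    ext; simp [blockSet]
  rw [h]
  exact .iInter fun i => ⟨_, measurable_pi_apply _ (measurableSet_singleton _), rfl⟩

lemma measurableSet_blockSet [MeasurableSingletonClass α] (a : ℤ) (t : ℕ) (x : Fin t → α) :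
    MeasurableSet (blockSet a t x) :=
  Measurable.comap_le (measurable_pi_lambda _ fun _ => measurable_pi_apply _) _
    (measurableSet_comap_blockSet (P := fun _ => True) x fun _ => trivial)

lemma measure_blockSet_eq [MeasurableSingletonClass α] {μ : Measure (ℤ → α)}
    (hμ : MeasurePreserving shift μ μ) (a b : ℤ) (t : ℕ) (x : Fin t → α) :
    μ (blockSet a t x) = μ (blockSet b t x) := by
  have hper : Function.Periodic (fun a => μ (blockSet a t x)) 1 := fun a => by
    simp only [← shift_preimage_blockSet,
      hμ.measure_preimage (measurableSet_blockSet a t x).nullMeasurableSet]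
  simpa using (hper.sub_int_mul_eq (x := a) (a - b)).symm

lemma blockPmf_eq_of_measurePreserving [MeasurableSingletonClass α] {μ : Measure (ℤ → α)}
    (hμ : MeasurePreserving shift μ μ) (a : ℤ) (t : ℕ) (x : Fin t → α) :
    blockPmf μ a t x = blockPmf μ 1 t x :=
  congrArg ENNReal.toReal (measure_blockSet_eq hμ a 1 t x)

lemma mixCoef_nonneg (μ : Measure (ℤ → α)) (s : ℕ) : 0 ≤ mixCoef μ s :=
  Real.sSup_nonneg (by rintro r ⟨i, E, F, -, -, -, rfl⟩; exact abs_nonneg _)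

lemma abs_condProb_sub_le_mixCoef (μ : Measure (ℤ → α)) [IsProbabilityMeasure μ] {s : ℕ} {i : ℤ}
    {E F : Set (ℤ → α)} (hE : MeasurableSet[pastSigma α i] E)
    (hF : MeasurableSet[futureSigma α (i + s)] F) (hE0 : μ E ≠ 0) :
    |(μ (F ∩ E)).toReal / (μ E).toReal - (μ F).toReal| ≤ mixCoef μ s := by
  refine le_csSup ⟨1, ?_⟩ ⟨i, E, F, hE, hF, hE0, rfl⟩
  rintro r ⟨-, E', F', -, -, -, rfl⟩
  exact abs_sub_le_of_nonneg_of_le (by positivity)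
    (div_le_one_of_le₀ (measureReal_mono Set.inter_subset_right) (by positivity))
    (by positivity) measureReal_le_one

lemma sub_mixCoef_mul_le_measure_inter (μ : Measure (ℤ → α)) [IsProbabilityMeasure μ] {s : ℕ}
    {i : ℤ} {E F : Set (ℤ → α)} (hE : MeasurableSet[pastSigma α i] E)
    (hF : MeasurableSet[futureSigma α (i + s)] F) :
    ((μ F).toReal - mixCoef μ s) * (μ E).toReal ≤ (μ (F ∩ E)).toReal := by
  rcases eq_or_ne (μ E) 0 with hE0 | hE0
  · simp [hE0]
  have hpos : 0 < (μ E).toReal := ENNReal.toReal_pos hE0 (measure_ne_top _ _)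
  have := (abs_le.mp (abs_condProb_sub_le_mixCoef μ hE hF hE0)).1
  rw [← le_div_iff₀ hpos]
  linarith

lemma sub_mixCoef_mul_le_measure_blockSet_inter [MeasurableSingletonClass α]
    {μ : Measure (ℤ → α)} [IsProbabilityMeasure μ] (hμ : MeasurePreserving shift μ μ)
    {t s : ℕ} {a b : ℤ} (hab : a + t - 1 + s = b) (x y : Fin t → α) :
    (blockPmf μ 1 t y - mixCoef μ s) * blockPmf μ 1 t x ≤
      (μ (blockSet a t x ∩ blockSet b t y)).toReal := by
  have hE : MeasurableSet[pastSigma α (a + t - 1)] (blockSet a t x) :=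
    measurableSet_comap_blockSet x fun k => by have := k.isLt; omega
  have hF : MeasurableSet[futureSigma α (a + t - 1 + s)] (blockSet b t y) :=
    measurableSet_comap_blockSet y fun k => by omega
  rw [← blockPmf_eq_of_measurePreserving hμ a t x, ← blockPmf_eq_of_measurePreserving hμ b t y,
    Set.inter_comm]
  exact sub_mixCoef_mul_le_measure_inter μ hE hF

lemma maxInfo_nonneg (μ : Measure (ℤ → α)) [IsProbabilityMeasure μ] (t : ℕ) :
    0 ≤ maxInfo μ t :=
  Real.sSup_nonneg (by
    rintro r ⟨x, hx, rfl⟩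
    exact Real.log_nonneg (one_le_one_div hx measureReal_le_one))

lemma exp_neg_maxInfo_le_blockPmf [Fintype α] {μ : Measure (ℤ → α)} {t : ℕ} {x : Fin t → α}
    (hx : 0 < blockPmf μ 1 t x) : exp (-maxInfo μ t) ≤ blockPmf μ 1 t x := by
  have hbdd : BddAbove {r : ℝ | ∃ y : Fin t → α, 0 < blockPmf μ 1 t y ∧
      r = log (1 / blockPmf μ 1 t y)} :=
    ((Set.finite_range fun y : Fin t → α => log (1 / blockPmf μ 1 t y)).subset
      (by rintro r ⟨y, -, rfl⟩; exact ⟨y, rfl⟩)).bddAbove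
  have hle : log (1 / blockPmf μ 1 t x) ≤ maxInfo μ t := le_csSup hbdd ⟨x, hx, rfl⟩
  rw [one_div, log_inv] at hle
  calc exp (-maxInfo μ t) ≤ exp (log (blockPmf μ 1 t x)) := exp_le_exp.mpr (by linarith)
    _ = blockPmf μ 1 t x := exp_log hx

lemma one_sub_mixCoef_mul_le_measure_blockSet_inter [Fintype α] [MeasurableSingletonClass α]
    {μ : Measure (ℤ → α)} [IsProbabilityMeasure μ] (hμ : MeasurePreserving shift μ μ)
    {t s : ℕ} {a b : ℤ} (hab : a + t - 1 + s = b) (x y : Fin t → α) :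
    (1 - mixCoef μ s * exp (maxInfo μ t)) * (blockPmf μ 1 t x * blockPmf μ 1 t y) ≤
      (μ (blockSet a t x ∩ blockSet b t y)).toReal := by
  set P := blockPmf μ 1 t x
  set Q := blockPmf μ 1 t y
  have hP : 0 ≤ P := ENNReal.toReal_nonneg
  obtain hQ | hQ := (show 0 ≤ Q from ENNReal.toReal_nonneg).eq_or_lt
  · rw [← hQ, mul_zero, mul_zero]
    exact ENNReal.toReal_nonneg
  have hQmin : 1 ≤ exp (maxInfo μ t) * Q := by
    have := exp_neg_maxInfo_le_blockPmf hQ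
    rwa [exp_neg, inv_le_iff_one_le_mul₀ (exp_pos _), mul_comm] at this
  have hd : mixCoef μ s ≤ mixCoef μ s * exp (maxInfo μ t) * Q := by
    rw [mul_assoc]
    exact le_mul_of_one_le_right (mixCoef_nonneg μ s) hQmin
  calc (1 - mixCoef μ s * exp (maxInfo μ t)) * (P * Q)
      = (Q - mixCoef μ s * exp (maxInfo μ t) * Q) * P := by ring
    _ ≤ (Q - mixCoef μ s) * P := by gcongr
    _ ≤ _ := sub_mixCoef_mul_le_measure_blockSet_inter hμ hab x y

end Blocks

noncomputable def idxBox (n L : ℕ) : Finset (ℤ × ℤ) :=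
  Finset.Icc 1 (n : ℤ) ×ˢ Finset.Icc (1 - (L : ℤ)) (n + L)

lemma window_subset_Icc {n L : ℕ} {i₁ : ℤ} (h₁ : 1 ≤ i₁) (h₂ : i₁ ≤ n) :
    window n L i₁ ⊆ Finset.Icc (1 - (L : ℤ)) (n + L) := by
  intro i₂ hi₂
  rw [Finset.mem_Icc]
  unfold window at hi₂
  split_ifs at hi₂ <;> rw [Finset.mem_Icc] at hi₂ <;> omega

lemma card_window (n L : ℕ) (i₁ : ℤ) : (window n L i₁).card = n := by
  unfold window
  split_ifs <;> rw [Int.card_Icc] <;> omega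

lemma idxWeight_eq_zero_of_notMem {n L : ℕ} {p : ℤ × ℤ} (hp : p ∉ idxBox n L) :
    idxWeight n L p.1 p.2 = 0 := by
  rw [idxWeight, if_neg]
  rintro ⟨hp₁, hp₂⟩
  rw [Finset.mem_Icc] at hp₁
  exact hp (Finset.mem_product.mpr
    ⟨Finset.mem_Icc.mpr hp₁, window_subset_Icc hp₁.1 hp₁.2 hp₂⟩)

lemma hasSum_idxWeight {n : ℕ} (hn : n ≠ 0) (L : ℕ) :
    HasSum (fun p : ℤ × ℤ => idxWeight n L p.1 p.2) 1 := by
  have hrow : ∀ i₁ ∈ Finset.Icc 1 (n : ℤ),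
      ∑ i₂ ∈ Finset.Icc (1 - (L : ℤ)) (n + L), idxWeight n L i₁ i₂ = n * ((n : ℝ) ^ 2)⁻¹ := by
    intro i₁ hi₁
    simp only [idxWeight, hi₁, true_and]
    rw [Finset.sum_ite_mem, Finset.inter_eq_right.mpr
      (window_subset_Icc (Finset.mem_Icc.mp hi₁).1 (Finset.mem_Icc.mp hi₁).2),
      Finset.sum_const, card_window, nsmul_eq_mul]
  convert hasSum_sum_of_ne_finset_zero (L := .unconditional _)
    (f := fun p : ℤ × ℤ => idxWeight n L p.1 p.2) fun p hp => idxWeight_eq_zero_of_notMem hp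
  rw [idxBox, Finset.sum_product, Finset.sum_congr rfl hrow, Finset.sum_const, Int.card_Icc,
    nsmul_eq_mul]
  field_simp
  norm_num

lemma idxWeight_nonneg (n L : ℕ) (i₁ i₂ : ℤ) : 0 ≤ idxWeight n L i₁ i₂ := by
  unfold idxWeight
  positivity

noncomputable def noOverlapWeight (n L : ℕ) (p : ℤ × ℤ) : ℝ :=
  if overlap L p.1 p.2 = 0 then idxWeight n L p.1 p.2 else 0

lemma noOverlapWeight_nonneg (n L : ℕ) (p : ℤ × ℤ) : 0 ≤ noOverlapWeight n L p := by
  unfold noOverlapWeight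
  split_ifs
  exacts [idxWeight_nonneg n L p.1 p.2, le_rfl]

lemma noOverlapWeight_le_idxWeight (n L : ℕ) (p : ℤ × ℤ) :
    noOverlapWeight n L p ≤ idxWeight n L p.1 p.2 := by
  unfold noOverlapWeight
  split_ifs
  exacts [le_rfl, idxWeight_nonneg n L p.1 p.2]

lemma noOverlapWeight_eq_zero_of_notMem {n L : ℕ} {p : ℤ × ℤ} (hp : p ∉ idxBox n L) :
    noOverlapWeight n L p = 0 :=
  le_antisymm ((noOverlapWeight_le_idxWeight n L p).trans_eq (idxWeight_eq_zero_of_notMem hp))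
    (noOverlapWeight_nonneg n L p)

lemma tsum_noOverlapWeight_le_one {n : ℕ} (hn : n ≠ 0) (L : ℕ) :
    ∑' p, noOverlapWeight n L p ≤ 1 :=
  ((summable_of_ne_finset_zero fun _ hp => noOverlapWeight_eq_zero_of_notMem hp).tsum_le_tsum
    (noOverlapWeight_le_idxWeight n L) (hasSum_idxWeight hn L).summable).trans_eq
    (hasSum_idxWeight hn L).tsum_eq

noncomputable def farPairs (n L g : ℕ) : Finset (ℤ × ℤ) :=
  (Finset.Icc (L : ℤ) (n - L + 1) ×ˢ Finset.Icc 1 (n : ℤ)).filter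
    fun p => p.1 + L - 1 + g ≤ p.2 ∨ p.2 + L - 1 + g ≤ p.1

lemma noOverlapWeight_of_mem_farPairs {n L g : ℕ} (hL : 1 ≤ L) (hg : 1 ≤ g) {p : ℤ × ℤ}
    (hp : p ∈ farPairs n L g) : noOverlapWeight n L p = ((n : ℝ) ^ 2)⁻¹ := by
  simp only [farPairs, Finset.mem_filter, Finset.mem_product, Finset.mem_Icc] at hp
  obtain ⟨⟨⟨hleft, hright⟩, h₂⟩, hfar⟩ := hp
  have hwin : window n L p.1 = Finset.Icc 1 (n : ℤ) := by
    rw [window, if_neg (by omega), if_pos hright]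
  have hov : overlap L p.1 p.2 = 0 := by
    unfold overlap
    split_ifs <;> omega
  rw [noOverlapWeight, if_pos hov, idxWeight, if_pos]
  rw [hwin, Finset.mem_Icc, Finset.mem_Icc]
  omega

lemma sq_sub_le_card_farPairs (n L g : ℕ) : (n - 2 * (L + g)) ^ 2 ≤ (farPairs n L g).card := by
  have hrow : ∀ i₁ ∈ Finset.Icc (L : ℤ) (n - L + 1), n - 2 * (L + g) ≤
      ((Finset.Icc 1 (n : ℤ)).filter
        fun i₂ => i₁ + L - 1 + g ≤ i₂ ∨ i₂ + L - 1 + g ≤ i₁).card := by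
    intro i₁ _
    have hsdiff : (Finset.Icc 1 (n : ℤ)).filter
        (fun i₂ => i₁ + L - 1 + g ≤ i₂ ∨ i₂ + L - 1 + g ≤ i₁) =
          Finset.Icc 1 (n : ℤ) \ Finset.Ioo (i₁ + 1 - L - g) (i₁ + L - 1 + g) := by
      ext i₂
      simp only [Finset.mem_filter, Finset.mem_sdiff, Finset.mem_Icc, Finset.mem_Ioo]
      omega
    have hcard := Finset.le_card_sdiff (Finset.Ioo (i₁ + 1 - L - g) (i₁ + L - 1 + g))
      (Finset.Icc 1 (n : ℤ))
    rw [Int.card_Icc, Int.card_Ioo] at hcard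
    rw [hsdiff]
    omega
  have hrows : n - 2 * (L + g) ≤ (Finset.Icc (L : ℤ) (n - L + 1)).card := by
    rw [Int.card_Icc]; omega
  rw [farPairs, Finset.card_filter, Finset.sum_product]
  simp only [← Finset.card_filter]
  calc (n - 2 * (L + g)) ^ 2 ≤ (Finset.Icc (L : ℤ) (n - L + 1)).card • (n - 2 * (L + g)) := by
        rw [smul_eq_mul, sq]; exact Nat.mul_le_mul_right _ hrows
    _ ≤ _ := Finset.card_nsmul_le_sum _ _ _ hrow

lemma card_mul_le_tsum {ι : Type*} {f : ι → ℝ} {t : Finset ι} (hft : ∀ i ∉ t, f i = 0)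
    (hf : ∀ i, 0 ≤ f i) (s : Finset ι) {c : ℝ} (hc : ∀ i ∈ s, c ≤ f i) :
    s.card * c ≤ ∑' i, f i := by
  rw [← nsmul_eq_mul]
  exact (s.card_nsmul_le_sum f c hc).trans
    ((summable_of_ne_finset_zero hft).sum_le_tsum s fun i _ => hf i)

section FixedLength

variable {α : Type*} [Fintype α] [MeasurableSpace α] [MeasurableSingletonClass α]
  {μ : Measure (ℤ → α)} [IsProbabilityMeasure μ]

lemma one_sub_mul_le_measure_blockSet_inter_of_far (hμ : MeasurePreserving shift μ μ)
    {L g : ℕ} {δ : ℝ} (hδ : ∀ s, g ≤ s → mixCoef μ s ≤ δ) {p : ℤ × ℤ}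
    (hp : p.1 + L - 1 + g ≤ p.2 ∨ p.2 + L - 1 + g ≤ p.1) (x y : Fin L → α) :
    (1 - δ * exp (maxInfo μ L)) * (blockPmf μ 1 L x * blockPmf μ 1 L y) ≤
      (μ (blockSet p.1 L x ∩ blockSet p.2 L y)).toReal := by
  have hmono : ∀ s, g ≤ s → ∀ P : ℝ, 0 ≤ P →
      (1 - δ * exp (maxInfo μ L)) * P ≤ (1 - mixCoef μ s * exp (maxInfo μ L)) * P :=
    fun s hs P hP => by gcongr; exact hδ s hs
  have hPP : 0 ≤ blockPmf μ 1 L x * blockPmf μ 1 L y := by unfold blockPmf; positivity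
  rcases hp with hp | hp
  · obtain ⟨s, hs⟩ : ∃ s : ℕ, p.1 + L - 1 + s = p.2 := ⟨(p.2 - p.1 - L + 1).toNat, by omega⟩
    exact (hmono s (by omega) _ hPP).trans
      (one_sub_mixCoef_mul_le_measure_blockSet_inter hμ hs x y)
  · obtain ⟨s, hs⟩ : ∃ s : ℕ, p.2 + L - 1 + s = p.1 := ⟨(p.1 - p.2 - L + 1).toNat, by omega⟩
    rw [mul_comm (blockPmf μ 1 L x)] at hPP ⊢
    rw [Set.inter_comm]
    exact (hmono s (by omega) _ hPP).trans
      (one_sub_mixCoef_mul_le_measure_blockSet_inter hμ hs y x)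

theorem mul_blockPmf_le_noOverlap_ratio (hμ : MeasurePreserving shift μ μ) {n L g : ℕ}
    (hL : 1 ≤ L) (hg : 1 ≤ g) (hn : 2 * (L + g) < n) {δ : ℝ} (hδ : ∀ s, g ≤ s → mixCoef μ s ≤ δ)
    (hδM : δ * exp (maxInfo μ L) ≤ 1) (x y : Fin L → α) :
    (1 - δ * exp (maxInfo μ L)) * (1 - 2 * ((L + g : ℝ) / n)) ^ 2 *
        (blockPmf μ 1 L x * blockPmf μ 1 L y) ≤
      (∑' p, noOverlapWeight n L p * (μ (blockSet p.1 L x ∩ blockSet p.2 L y)).toReal) /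
        ∑' p, noOverlapWeight n L p := by
  set A : ℝ := (farPairs n L g).card * ((n : ℝ) ^ 2)⁻¹
  have hn0 : (0 : ℝ) < n := by exact_mod_cast (show 0 < n by omega)
  have hfrac : 2 * ((L + g : ℝ) / n) < 1 := by
    rw [mul_div_assoc', div_lt_one hn0]; exact_mod_cast hn
  have hA : (1 - 2 * ((L + g : ℝ) / n)) ^ 2 ≤ A := by
    have hcard : ((n - 2 * (L + g) : ℕ) : ℝ) ^ 2 ≤ (farPairs n L g).card := by
      exact_mod_cast sq_sub_le_card_farPairs n L g
    rw [Nat.cast_sub hn.le] at hcard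
    push_cast at hcard
    calc (1 - 2 * ((L + g : ℝ) / n)) ^ 2 = (n - 2 * (L + g : ℝ)) ^ 2 * ((n : ℝ) ^ 2)⁻¹ := by
          field_simp
      _ ≤ A := mul_le_mul_of_nonneg_right hcard (by positivity)
  have hApos : 0 < A := (pow_pos (by linarith) 2).trans_le hA
  have hden : A ≤ ∑' p, noOverlapWeight n L p :=
    card_mul_le_tsum (fun _ hp => noOverlapWeight_eq_zero_of_notMem hp)
      (noOverlapWeight_nonneg n L) _ fun p hp => (noOverlapWeight_of_mem_farPairs hL hg hp).ge
  have hnum : A * ((1 - δ * exp (maxInfo μ L)) * (blockPmf μ 1 L x * blockPmf μ 1 L y)) ≤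
      ∑' p, noOverlapWeight n L p * (μ (blockSet p.1 L x ∩ blockSet p.2 L y)).toReal := by
    rw [mul_assoc]
    refine card_mul_le_tsum (t := idxBox n L)
      (fun _ hp => by rw [noOverlapWeight_eq_zero_of_notMem hp, zero_mul])
      (fun p => mul_nonneg (noOverlapWeight_nonneg n L p) ENNReal.toReal_nonneg) _
      fun p hp => ?_
    rw [noOverlapWeight_of_mem_farPairs hL hg hp]
    exact mul_le_mul_of_nonneg_left (one_sub_mul_le_measure_blockSet_inter_of_far hμ hδ
      (Finset.mem_filter.mp hp).2 x y) (by positivity)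
  have hPP : 0 ≤ blockPmf μ 1 L x * blockPmf μ 1 L y := by unfold blockPmf; positivity
  calc (1 - δ * exp (maxInfo μ L)) * (1 - 2 * ((L + g : ℝ) / n)) ^ 2 *
        (blockPmf μ 1 L x * blockPmf μ 1 L y)
      ≤ A * ((1 - δ * exp (maxInfo μ L)) * (blockPmf μ 1 L x * blockPmf μ 1 L y)) := by
        rw [mul_right_comm, mul_comm A]
        gcongr
    _ ≤ _ := hnum
    _ ≤ _ := le_div_self ((mul_nonneg hApos.le (mul_nonneg (by linarith) hPP)).trans hnum)
        (hApos.trans_le hden) (tsum_noOverlapWeight_le_one (by omega) L)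

end FixedLength

open Topology

lemma tendsto_natCeil_comp_div_atTop {f : ℝ → ℝ} (hf0 : ∀ᶠ x in atTop, 0 ≤ f x)
    (hf : Tendsto (fun x => f x / x) atTop (𝓝 0)) :
    Tendsto (fun n : ℕ => (⌈f n⌉₊ : ℝ) / n) atTop (𝓝 0) := by
  have hbound : Tendsto (fun n : ℕ => (f n + 1) / n) atTop (𝓝 0) := by
    simpa [add_div] using
      (hf.comp tendsto_natCast_atTop_atTop).add tendsto_one_div_atTop_nhds_zero_nat
  refine squeeze_zero' (.of_forall fun n => by positivity) ?_ hbound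
  filter_upwards [tendsto_natCast_atTop_atTop.eventually hf0] with n hn
  gcongr
  exact (Nat.ceil_lt_add_one hn).le

lemma tendsto_natCeil_rpow_div_atTop {θ : ℝ} (hθ : θ < 1) :
    Tendsto (fun n : ℕ => (⌈(n : ℝ) ^ θ⌉₊ : ℝ) / n) atTop (𝓝 0) := by
  refine tendsto_natCeil_comp_div_atTop (f := fun x => x ^ θ) ?_ ?_
  · filter_upwards [eventually_ge_atTop 0] with x hx using rpow_nonneg hx θ
  · refine (tendsto_rpow_neg_atTop (sub_pos.mpr hθ)).congr' ?_
    filter_upwards [eventually_gt_atTop 0] with x hx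
    rw [neg_sub, rpow_sub_one hx.ne']

lemma ell_le {β : ℝ} (hβ : 0 ≤ β) (n : ℕ) : (ell β n : ℝ) ≤ β * log n + 1 :=
  (Nat.ceil_lt_add_one (mul_nonneg hβ (log_natCast_nonneg n))).le

lemma tendsto_ell_atTop {β : ℝ} (hβ : 0 < β) : Tendsto (ell β) atTop atTop :=
  tendsto_nat_ceil_atTop.comp
    ((tendsto_log_atTop.comp tendsto_natCast_atTop_atTop).const_mul_atTop hβ)

lemma tendsto_ell_div_atTop {β : ℝ} (hβ : 0 ≤ β) :
    Tendsto (fun n : ℕ => (ell β n : ℝ) / n) atTop (𝓝 0) := by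
  refine tendsto_natCeil_comp_div_atTop (f := fun x => β * log x) ?_ ?_
  · filter_upwards [eventually_ge_atTop 1] with x hx using mul_nonneg hβ (log_nonneg hx)
  · simpa [mul_div_assoc] using
      (isLittleO_log_id_atTop.tendsto_div_nhds_zero).const_mul β

lemma tendsto_rpow_neg_mul_exp_ell {β H η : ℝ} (hβ : 0 < β) (hH : 0 ≤ H) (hη : 0 < η)
    {m : ℕ → ℝ} (hm : Tendsto (fun t : ℕ => m t / t) atTop (𝓝 H)) :
    Tendsto (fun n : ℕ => (⌈(n : ℝ) ^ ((β * H + η / 2) / (β * H + η))⌉₊ : ℝ) ^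
      (-(β * H + η)) * exp (m (ell β n))) atTop (𝓝 0) := by
  set θ := (β * H + η / 2) / (β * H + η) with hθ
  set c := H + η / (4 * β) with hc_def
  have hc : H < c := lt_add_of_pos_right H (by positivity)
  have hlog : Tendsto (fun n : ℕ => c + -(η / 4 * log n)) atTop atBot :=
    tendsto_atBot_add_const_left _ c (tendsto_neg_atTop_atBot.comp
      ((tendsto_log_atTop.comp tendsto_natCast_atTop_atTop).const_mul_atTop (by positivity)))
  refine squeeze_zero' (.of_forall fun n => by positivity) ?_ (tendsto_exp_atBot.comp hlog)
  filter_upwards [(hm.comp (tendsto_ell_atTop hβ)).eventually (eventually_le_nhds hc),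
    (tendsto_ell_atTop hβ).eventually_gt_atTop 0, eventually_ge_atTop 1] with n hmn hℓ hn
  have hn0 : (0 : ℝ) < n := by exact_mod_cast hn
  have hgap : (⌈(n : ℝ) ^ θ⌉₊ : ℝ) ^ (-(β * H + η)) ≤ exp (-(β * H + η / 2) * log n) := by
    calc _ ≤ ((n : ℝ) ^ θ) ^ (-(β * H + η)) :=
          rpow_le_rpow_of_nonpos (by positivity) (Nat.le_ceil _)
            (by linarith [mul_nonneg hβ.le hH])
      _ = exp (-(β * H + η / 2) * log n) := by
        rw [← rpow_mul hn0.le, rpow_def_of_pos hn0, hθ]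
        congr 1
        field_simp
  have hmax : m (ell β n) ≤ (β * log n + 1) * c := by
    rw [Function.comp_apply, div_le_iff₀ (by exact_mod_cast hℓ)] at hmn
    nlinarith [ell_le hβ.le n]
  calc _ ≤ exp (-(β * H + η / 2) * log n) * exp ((β * log n + 1) * c) := by gcongr
    _ = exp (c + -(η / 4 * log n)) := by
      rw [← exp_add, hc_def]
      congr 1
      field_simp
      ring

/-- Conditioned on no overlap, the joint law of the two reads is
asymptotically lower bounded by the product of their marginal laws. -/
theorem asymptotic_independence_given_no_overlap
    (μ : Measure (ℤ → 𝒳)) [IsProbabilityMeasure μ]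
    (herg : Ergodic (shift (𝒳 := 𝒳)) μ)
    (β : ℝ) (hβ : 0 < β)
    -- the minus-infinity-order Rényi entropy rate exists and is finite
    (Hinf : ℝ) (hHinf : Tendsto (fun t : ℕ => maxInfo μ t / t) atTop (nhds Hinf))
    -- polynomially decaying strong mixing coefficients
    (η : ℝ) (hη : 0 < η)
    (hmix : ∀ s : ℕ, 1 ≤ s → mixCoef μ s ≤ (s : ℝ) ^ (-(β * Hinf + η))) :
    ∃ ξ : ℕ → ℝ, Tendsto ξ atTop (nhds 1) ∧
      ∀ᶠ n : ℕ in atTop, ∀ x₁ x₂ : Fin (ell β n) → 𝒳,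
        ξ n * (blockPmf μ 1 (ell β n) x₁ * blockPmf μ 1 (ell β n) x₂) ≤
          (∑' p : ℤ × ℤ,
              (if overlap (ell β n) p.1 p.2 = 0 then idxWeight n (ell β n) p.1 p.2 else 0) *
                (μ {ω | (∀ k : Fin (ell β n), ω (p.1 + ((k : ℕ) : ℤ)) = x₁ k) ∧
                    ∀ k : Fin (ell β n), ω (p.2 + ((k : ℕ) : ℤ)) = x₂ k}).toReal) /
            (∑' p : ℤ × ℤ,
              if overlap (ell β n) p.1 p.2 = 0 then idxWeight n (ell β n) p.1 p.2 else 0) := by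
  have hH : 0 ≤ Hinf :=
    ge_of_tendsto' hHinf fun t => div_nonneg (maxInfo_nonneg μ t) t.cast_nonneg
  have hθ : (β * Hinf + η / 2) / (β * Hinf + η) < 1 := by
    rw [div_lt_one (by positivity)]; linarith
  set g : ℕ → ℕ := fun n => ⌈(n : ℝ) ^ ((β * Hinf + η / 2) / (β * Hinf + η))⌉₊
  set ε : ℕ → ℝ := fun n => (g n : ℝ) ^ (-(β * Hinf + η)) * exp (maxInfo μ (ell β n))
  have hε : Tendsto ε atTop (𝓝 0) := tendsto_rpow_neg_mul_exp_ell hβ hH hη hHinf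
  have hr : Tendsto (fun n : ℕ => (ell β n + g n : ℝ) / n) atTop (𝓝 0) := by
    simpa using ((tendsto_ell_div_atTop hβ.le).add (tendsto_natCeil_rpow_div_atTop hθ)).congr
      fun n => (add_div _ _ _).symm
  refine ⟨fun n => (1 - ε n) * (1 - 2 * ((ell β n + g n : ℝ) / n)) ^ 2, ?_, ?_⟩
  · have h1 : Tendsto (fun _ : ℕ => (1 : ℝ)) atTop (𝓝 1) := tendsto_const_nhds
    simpa using (h1.sub hε).mul ((h1.sub (hr.const_mul 2)).pow 2)
  filter_upwards [(tendsto_ell_atTop hβ).eventually_ge_atTop 1,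
    hε.eventually (eventually_le_nhds one_pos), hr.eventually (eventually_lt_nhds one_half_pos),
    eventually_ge_atTop 1] with n hℓ hεn hrn hn x₁ x₂
  have hn0 : (0 : ℝ) < n := by exact_mod_cast hn
  have hg : 1 ≤ g n := Nat.one_le_iff_ne_zero.mpr (Nat.ceil_pos.mpr (by positivity)).ne'
  have hgap : 2 * (ell β n + g n) < n := by
    rw [div_lt_iff₀ hn0] at hrn
    exact_mod_cast (by linarith : (2 * (ell β n + g n) : ℝ) < n)
  have hδ : ∀ s, g n ≤ s → mixCoef μ s ≤ (g n : ℝ) ^ (-(β * Hinf + η)) := fun s hs =>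
    (hmix s (hg.trans hs)).trans (rpow_le_rpow_of_nonpos (by positivity) (by exact_mod_cast hs)
      (by linarith [mul_nonneg hβ.le hH]))
  exact mul_blockPmf_le_noOverlap_ratio herg.toMeasurePreserving hℓ hg hgap hδ hεn x₁ x₂

end
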